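/- arXiv:1501.05234 — 3 statements merged into one kernel-verified Lean document; each statement's English description precedes it below -/
import Mathlib

section
/- For every ε ∈ F with ε ≠ 0, one has the matrix identity x₋(ε^{1−2θ}, 0) · x₊(0, ε^θ) = x₊(ε^{2θ−1}, 0) · h(ε) · w in GL(4,F). -/
open Matrix Pointwise

/-- The Suzuki unipotent `x₊(t,u)` as a 4×4 matrix. -/
def suzXp {F : Type*} [Field F] (θ : ℕ) (t u : F) : Matrix (Fin 4) (Fin 4) F :=
  !![1, t ^ θ, u, t ^ (2 * θ + 1) + t ^ θ * u + u ^ (2 * θ);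
     0, 1, t, t ^ (θ + 1) + u;
     0, 0, 1, t ^ θ;
     0, 0, 0, 1]

/-- The antidiagonal permutation matrix `w` (1-indexed: entry 1 iff i+j = 5). -/
def suzW {F : Type*} [Field F] : Matrix (Fin 4) (Fin 4) F :=
  Matrix.of fun i j => if (i : ℕ) + (j : ℕ) = 3 then 1 else 0

/-- The torus element `h(ε) = diag(ε, ε^{2θ-1}, ε^{1-2θ}, ε⁻¹)`. -/
def suzH {F : Type*} [Field F] (θ : ℕ) (ε : F) : Matrix (Fin 4) (Fin 4) F :=
  Matrix.diagonal ![ε, ε ^ (2 * (θ : ℤ) - 1), ε ^ (1 - 2 * (θ : ℤ)), ε⁻¹]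

/-- The opposite unipotent `x₋(t,u) = w·x₊(t,u)·w`. -/
def suzXm {F : Type*} [Field F] (θ : ℕ) (t u : F) : Matrix (Fin 4) (Fin 4) F :=
  suzW * suzXp θ t u * suzW

/-- `U = {x₊(t,u)}` viewed as a subset of `GL(4,F)`. -/
def suzU (F : Type*) [Field F] (θ : ℕ) : Set (GL (Fin 4) F) :=
  {g | ∃ t u : F, (↑g : Matrix (Fin 4) (Fin 4) F) = suzXp θ t u}

/-- `U⁻ = {x₋(t,u)}` viewed as a subset of `GL(4,F)`. -/
def suzUm (F : Type*) [Field F] (θ : ℕ) : Set (GL (Fin 4) F) :=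
  {g | ∃ t u : F, (↑g : Matrix (Fin 4) (Fin 4) F) = suzXm θ t u}

set_option maxHeartbeats 2000000 in
theorem suzuki_hw_identity (m θ : ℕ) (hθ : θ = 2 ^ m)
    (F : Type*) [Field F] [Fintype F] (hF : Fintype.card F = 2 ^ (2 * m + 1))
    (ε : F) (hε : ε ≠ 0) :
    suzXm θ (ε ^ (1 - 2 * (θ : ℤ))) 0 * suzXp θ 0 (ε ^ θ) =
      suzXp θ (ε ^ (2 * (θ : ℤ) - 1)) 0 * suzH θ ε * suzW := by
  have hθ0 : θ ≠ 0 := by subst hθ; exact (Nat.two_pow_pos m).ne'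
  have hcard : Fintype.card F = 2 * θ ^ 2 := by subst hθ; rw [hF]; ring
  have h1 : 1 ≤ 2 * θ ^ 2 := Nat.one_le_iff_ne_zero.mpr (by simp [hθ0])
  have hK : ε ^ (2 * (θ : ℤ) ^ 2 - 1) = 1 := by
    have h := FiniteField.pow_card_sub_one_eq_one ε hε
    rw [hcard] at h
    rw [show (2 * (θ:ℤ)^2 - 1) = ((2 * θ^2 - 1 : ℕ) : ℤ) by
      rw [Nat.cast_sub h1]; push_cast; ring, zpow_natCast, h]
  obtain ⟨n, hp, hn⟩ := FiniteField.card F (ringChar F)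
  have hp2 : ringChar F = 2 := by
    have hd : ringChar F ∣ 2 ^ (2 * m + 1) := by
      rw [← hF, hn]; exact dvd_pow_self _ (by exact_mod_cast n.ne_zero)
    exact (Nat.prime_dvd_prime_iff_eq hp Nat.prime_two).mp (hp.dvd_of_dvd_pow hd)
  have h2 : ∀ a : F, a + a = 0 := by
    intro a
    have h20 : (2 : F) = 0 := by
      have := ringChar.Nat.cast_ringChar (R := F)
      rw [hp2] at this; exact_mod_cast this
    rw [← two_mul, h20, zero_mul]
  have hcong : ∀ a b k : ℤ, a = b + (2 * (θ:ℤ)^2 - 1) * k → ε ^ a = ε ^ b := by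
    intro a b k hab
    rw [hab, zpow_add₀ hε, _root_.zpow_mul, hK]; simp
  have hsum : ∀ a b k : ℤ, a = b + (2 * (θ:ℤ)^2 - 1) * k → ε ^ a + ε ^ b = 0 := by
    intro a b k hab
    rw [hcong a b k hab]; exact h2 _
  ext i j
  fin_cases i <;> fin_cases j <;>
    simp (config := { decide := true }) [suzXp, suzXm, suzW, suzH, Matrix.mul_apply,
      Fin.sum_univ_four, Matrix.vecMul_diagonal, Matrix.vecHead, Matrix.vecTail,
      zero_pow hθ0, hθ0]
  all_goals try simp only [← zpow_natCast, ← _root_.zpow_mul, ← _root_.zpow_neg_one, ← zpow_add₀ hε]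
  all_goals try push_cast []
  · symm; conv_rhs => rw [← zpow_zero ε]
    exact hcong _ _ 2 (by ring)
  · exact hcong _ _ (-1) (by ring)
  · conv_rhs => rw [← zpow_one ε]
    exact hcong _ _ 1 (by ring)
  · exact hcong _ _ (-2) (by ring)
  · symm; conv_rhs => rw [← zpow_zero ε]
    exact hcong _ _ 0 (by ring)
  · exact hcong _ _ (-1) (by ring)
  · exact hsum _ _ 0 (by ring)
  · exact hcong _ _ (-2) (by ring)
  · conv_lhs => rw [← zpow_zero ε]
    exact hsum _ _ (-1) (by ring)
  · exact hsum _ _ 0 (by ring)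
  · exact hcong _ _ (-2) (by ring)
  · exact hsum _ _ (-1) (by ring)
  · conv_lhs => rw [← zpow_zero ε]
    exact hsum _ _ (-1) (by ring)
end

section
/- For every ε ∈ F with ε ≠ 0, the element h(ε)·w lies in the product set U · U⁻ · U. -/
open Matrix Pointwise

/-!
Put `a = ε ^ θ`. Since `θ * 2θ = q`, Frobenius gives `a ^ (2θ) = ε`, and with this one checks
entrywise, in characteristic 2, the Bruhat-type factorisation
`h(ε) w = x₊(0, a) · x₋(ε / a², a⁻¹) · x₊(a² / ε, 0)`.
The factors are unipotent, hence invertible, so this is a factorisation in `GL(4, F)`.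
-/

section SuzukiMatrices

variable {F : Type*} [Field F] {θ : ℕ}

theorem det_suzXp (t u : F) : (suzXp θ t u).det = 1 := by
  rw [Matrix.det_of_isUpperTriangular]
  · simp [suzXp, Fin.prod_univ_four]
  · intro i j hij
    fin_cases i <;> fin_cases j <;> simp_all [suzXp]

theorem suzW_mul_suzW : (suzW : Matrix (Fin 4) (Fin 4) F) * suzW = 1 := by
  ext i j
  fin_cases i <;> fin_cases j <;> simp [suzW, Matrix.mul_apply, Fin.sum_univ_four]

theorem det_suzXm (t u : F) : (suzXm θ t u).det = 1 := by
  rw [suzXm, det_mul, det_mul, det_suzXp, mul_one, ← det_mul, suzW_mul_suzW, det_one]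

theorem suzXp_zero_left (hθ : θ ≠ 0) (u : F) :
    suzXp θ 0 u = !![1, 0, u, u ^ (2 * θ); 0, 1, 0, u; 0, 0, 1, 0; 0, 0, 0, 1] := by
  simp [suzXp, hθ]

theorem suzXp_zero_right (hθ : θ ≠ 0) (t : F) :
    suzXp θ t 0 = !![1, t ^ θ, 0, t ^ (2 * θ + 1);
      0, 1, t, t ^ (θ + 1);
      0, 0, 1, t ^ θ;
      0, 0, 0, 1] := by
  simp [suzXp, hθ]

theorem suzXm_eq (t u : F) :
    suzXm θ t u = !![1, 0, 0, 0;
      t ^ θ, 1, 0, 0;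
      t ^ (θ + 1) + u, t, 1, 0;
      t ^ (2 * θ + 1) + t ^ θ * u + u ^ (2 * θ), u, t ^ θ, 1] := by
  ext i j
  fin_cases i <;> fin_cases j <;> simp [suzXm, suzW, suzXp, Matrix.mul_apply, Fin.sum_univ_four]

theorem suzH_mul_suzW (ε : F) :
    suzH θ ε * suzW = !![0, 0, 0, ε;
      0, 0, ε ^ (2 * (θ : ℤ) - 1), 0;
      0, ε ^ (1 - 2 * (θ : ℤ)), 0, 0;
      ε⁻¹, 0, 0, 0] := by
  ext i j
  fin_cases i <;> fin_cases j <;> simp [suzH, suzW, Matrix.mul_apply, Fin.sum_univ_four]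

theorem mem_suzU_mul_suzUm_mul_suzU {g : GL (Fin 4) F} {t₁ u₁ t₂ u₂ t₃ u₃ : F}
    (hg : (g : Matrix (Fin 4) (Fin 4) F) =
      suzXp θ t₁ u₁ * suzXm θ t₂ u₂ * suzXp θ t₃ u₃) :
    g ∈ suzU F θ * suzUm F θ * suzU F θ := by
  let x₁ := GeneralLinearGroup.mkOfDetNeZero (suzXp θ t₁ u₁) (by simp [det_suzXp])
  let y₂ := GeneralLinearGroup.mkOfDetNeZero (suzXm θ t₂ u₂) (by simp [det_suzXm])
  let x₃ := GeneralLinearGroup.mkOfDetNeZero (suzXp θ t₃ u₃) (by simp [det_suzXp])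
  have : g = x₁ * y₂ * x₃ := Units.ext hg
  exact this ▸ Set.mul_mem_mul (Set.mul_mem_mul ⟨t₁, u₁, rfl⟩ ⟨t₂, u₂, rfl⟩) ⟨t₃, u₃, rfl⟩

theorem suzH_mul_suzW_eq_suzXp_mul_suzXm_mul_suzXp [CharP F 2] (hθ : θ ≠ 0)
    {ε a : F} (hε : ε ≠ 0) (hεa : ε ^ θ = a) (haε : a ^ (2 * θ) = ε) :
    suzH θ ε * suzW = suzXp θ 0 a * suzXm θ (ε / a ^ 2) a⁻¹ * suzXp θ (a ^ 2 / ε) 0 := by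
  have ha : a ≠ 0 := hεa ▸ pow_ne_zero θ hε
  have ht₂ : (ε / a ^ 2) ^ θ = a / ε := by rw [div_pow, ← pow_mul, haε, hεa]
  have ht₃ : (a ^ 2 / ε) ^ θ = ε / a := by rw [div_pow, ← pow_mul, haε, hεa]
  have hpow₁ : ε ^ (2 * (θ : ℤ) - 1) = a ^ 2 / ε := by
    rw [zpow_sub₀ hε, zpow_one, _root_.zpow_mul', zpow_natCast, hεa, zpow_ofNat]
  have hpow₂ : ε ^ (1 - 2 * (θ : ℤ)) = ε / a ^ 2 := by
    rw [zpow_sub₀ hε, zpow_one, _root_.zpow_mul', zpow_natCast, hεa, zpow_ofNat]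
  rw [suzH_mul_suzW, hpow₁, hpow₂, suzXp_zero_left hθ, haε, suzXm_eq, inv_pow, haε,
    suzXp_zero_right hθ]
  simp only [pow_succ _ θ, pow_succ _ (2 * θ), pow_mul' _ 2 θ, ht₂, ht₃]
  ext i j
  fin_cases i <;> fin_cases j <;> simp [Matrix.mul_apply, Fin.sum_univ_four] <;> field_simp <;>
    simp [CharTwo.add_self_eq_zero]

end SuzukiMatrices

theorem suzuki_hw_mem_UUmU (m θ : ℕ) (hθ : θ = 2 ^ m)
    (F : Type*) [Field F] [Fintype F] (hF : Fintype.card F = 2 ^ (2 * m + 1))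
    (ε : F) (hε : ε ≠ 0) (g : GL (Fin 4) F)
    (hg : (↑g : Matrix (Fin 4) (Fin 4) F) = suzH θ ε * suzW) :
    g ∈ suzU F θ * suzUm F θ * suzU F θ := by
  have : CharP F 2 := charP_of_card_eq_prime_pow hF
  have hfrob : (ε ^ θ) ^ (2 * θ) = ε := by
    rw [← pow_mul, show θ * (2 * θ) = Fintype.card F by rw [hF, hθ]; ring,
      FiniteField.pow_card]
  rw [suzH_mul_suzW_eq_suzXp_mul_suzXm_mul_suzXp (hθ ▸ pow_ne_zero m two_ne_zero) hε rfl
    hfrob] at hg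
  exact mem_suzU_mul_suzUm_mul_suzU hg
end

section
/- For every ε ∈ F with ε ≠ 0, one has the matrix identity x₊(0, 1) · x₋(1, 1 + ε^θ) · x₊(ε^{1−2θ}, ε^{−θ}) = h(ε) · x₋(ε^{2θ−1}·(1 + ε^{2θ−1}), ε + ε^θ + ε^{2θ}) in GL(4,F). -/
open Matrix Pointwise

/-! Let `b = ε ^ θ`. Since `x ↦ x ^ θ` is additive and `ε ^ (2θ²) = ε`, every power `t ^ θ`,
`u ^ (2θ)` occurring in the five matrices is a rational function of `ε` and `b`; e.g.
`(ε / b²) ^ θ = b / ε` and `(ε + b + b²) ^ (2θ) = b² + ε + ε²`. Once these are substituted, the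
identity no longer involves `θ`: it is an identity between 4×4 matrices over `𝔽₂(ε, b)`, checked
entrywise. -/

section

variable {F : Type*} [Field F]

/-- `x₊(t, u)` with `t ^ θ` and `u ^ (2 * θ)` replaced by independent entries `a` and `c`;
`unipLower` does the same for `x₋(t, u)`. -/
def unipUpper (t u a c : F) : Matrix (Fin 4) (Fin 4) F :=
  !![1, a, u, a ^ 2 * t + a * u + c;
     0, 1, t, a * t + u;
     0, 0, 1, a;
     0, 0, 0, 1]

def unipLower (t u a c : F) : Matrix (Fin 4) (Fin 4) F :=
  !![1, 0, 0, 0;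
     a, 1, 0, 0;
     a * t + u, t, 1, 0;
     a ^ 2 * t + a * u + c, u, a, 1]

theorem suzXp_eq_unipUpper (θ : ℕ) (t u : F) :
    suzXp θ t u = unipUpper t u (t ^ θ) (u ^ (2 * θ)) := by
  rw [suzXp, unipUpper, pow_succ, pow_succ, mul_comm 2 θ, pow_mul]

theorem suzXm_eq_unipLower (θ : ℕ) (t u : F) :
    suzXm θ t u = unipLower t u (t ^ θ) (u ^ (2 * θ)) := by
  rw [suzXm, suzXp_eq_unipUpper]
  ext i j
  fin_cases i <;> fin_cases j <;> simp [suzW, unipUpper, unipLower, mul_apply, Fin.sum_univ_four]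

theorem zpow_two_mul_sub_one {ε : F} (hε : ε ≠ 0) (θ : ℕ) :
    ε ^ (2 * (θ : ℤ) - 1) = (ε ^ θ) ^ 2 / ε := by
  rw [zpow_sub₀ hε, zpow_one, ← pow_mul']
  norm_cast

theorem zpow_one_sub_two_mul {ε : F} (hε : ε ≠ 0) (θ : ℕ) :
    ε ^ (1 - 2 * (θ : ℤ)) = ε / (ε ^ θ) ^ 2 := by
  rw [zpow_sub₀ hε, zpow_one, ← pow_mul']
  norm_cast

theorem suzH_eq_diagonal (θ : ℕ) {ε : F} (hε : ε ≠ 0) :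
    suzH θ ε = diagonal ![ε, (ε ^ θ) ^ 2 / ε, ε / (ε ^ θ) ^ 2, ε⁻¹] := by
  rw [suzH, zpow_two_mul_sub_one hε, zpow_one_sub_two_mul hε]

theorem unipUpper_mul_unipLower_mul_unipUpper [CharP F 2] {ε b : F} (hε : ε ≠ 0) (hb : b ≠ 0) :
    unipUpper 0 1 0 1 * unipLower 1 (1 + b) 1 (1 + ε) * unipUpper (ε / b ^ 2) b⁻¹ (b / ε) ε⁻¹ =
      diagonal ![ε, b ^ 2 / ε, ε / b ^ 2, ε⁻¹] *
        unipLower (b ^ 2 / ε * (1 + b ^ 2 / ε)) (ε + b + b ^ 2) (ε / b * (1 + ε / b))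
          (b ^ 2 + ε + ε ^ 2) := by
  ext i j
  fin_cases i <;> fin_cases j <;>
  · simp only [unipUpper, unipLower, mul_apply, Fin.sum_univ_four, diagonal_apply, of_apply,
      cons_val, Fin.isValue, Fin.reduceFinMk, Fin.reduceEq, if_true, if_false]
    field_simp
    ring_nf
    simp only [CharTwo.ofNat_eq_mod, Nat.reduceMod, Nat.cast_zero, Nat.cast_one]
    ring

theorem suzuki_torus_identity_of_pow_add [CharP F 2] {θ : ℕ}
    (hadd : ∀ x y : F, (x + y) ^ θ = x ^ θ + y ^ θ) {ε : F} (hε : ε ≠ 0)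
    (hq : ε ^ (θ * (2 * θ)) = ε) :
    suzXp θ 0 1 * suzXm θ 1 (1 + ε ^ θ) *
        suzXp θ (ε ^ (1 - 2 * (θ : ℤ))) (ε ^ (-(θ : ℤ))) =
      suzH θ ε *
        suzXm θ (ε ^ (2 * (θ : ℤ) - 1) * (1 + ε ^ (2 * (θ : ℤ) - 1)))
          (ε + ε ^ θ + ε ^ (2 * θ)) := by
  obtain ⟨b, hb_def⟩ : ∃ b, ε ^ θ = b := ⟨_, rfl⟩
  have hb : b ≠ 0 := hb_def ▸ pow_ne_zero θ hε
  have hadd2 : ∀ x y : F, (x + y) ^ (2 * θ) = x ^ (2 * θ) + y ^ (2 * θ) := fun x y => by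
    rw [pow_mul', pow_mul', pow_mul', hadd, CharTwo.add_sq]
  have hε2θ : ε ^ (2 * θ) = b ^ 2 := by rw [pow_mul', hb_def]
  have hb2θ : b ^ (2 * θ) = ε := by rw [← hb_def, ← pow_mul, hq]
  have hbsqθ : (b ^ 2) ^ θ = ε := by rw [← pow_mul, hb2θ]
  have hεneg : ε ^ (-(θ : ℤ)) = b⁻¹ := by rw [_root_.zpow_neg, zpow_natCast, hb_def]
  have h0 : (0 : F) ^ θ = 0 := by simpa using hadd 0 0
  have h1b : (1 + b) ^ (2 * θ) = 1 + ε := by rw [hadd2, one_pow, hb2θ]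
  have hεb : (ε / b ^ 2) ^ θ = b / ε := by rw [div_pow, hbsqθ, hb_def]
  have hbinv : b⁻¹ ^ (2 * θ) = ε⁻¹ := by rw [inv_pow, hb2θ]
  have ht : (b ^ 2 / ε * (1 + b ^ 2 / ε)) ^ θ = ε / b * (1 + ε / b) := by
    rw [mul_pow, hadd, div_pow, one_pow, hbsqθ, hb_def]
  have hu : (ε + b + b ^ 2) ^ (2 * θ) = b ^ 2 + ε + ε ^ 2 := by
    rw [hadd2, hadd2, hε2θ, hb2θ, pow_right_comm, hb2θ]
  rw [zpow_one_sub_two_mul hε, hεneg, zpow_two_mul_sub_one hε, hε2θ, suzH_eq_diagonal θ hε,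
    hb_def, suzXp_eq_unipUpper, suzXp_eq_unipUpper, suzXm_eq_unipLower, suzXm_eq_unipLower,
    h0, h1b, hεb, hbinv, ht, hu, one_pow, one_pow]
  exact unipUpper_mul_unipLower_mul_unipUpper hε hb

end

theorem suzuki_torus_identity (m θ : ℕ) (hθ : θ = 2 ^ m)
    (F : Type*) [Field F] [Fintype F] (hF : Fintype.card F = 2 ^ (2 * m + 1))
    (ε : F) (hε : ε ≠ 0) :
    suzXp θ 0 1 * suzXm θ 1 (1 + ε ^ θ) *
        suzXp θ (ε ^ (1 - 2 * (θ : ℤ))) (ε ^ (-(θ : ℤ))) =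
      suzH θ ε *
        suzXm θ (ε ^ (2 * (θ : ℤ) - 1) * (1 + ε ^ (2 * (θ : ℤ) - 1)))
          (ε + ε ^ θ + ε ^ (2 * θ)) := by
  have : CharP F 2 := charP_of_card_eq_prime_pow hF
  subst hθ
  refine suzuki_torus_identity_of_pow_add (fun x y => add_pow_char_pow x y 2 m) hε ?_
  rw [show 2 ^ m * (2 * 2 ^ m) = Fintype.card F by rw [hF]; ring, FiniteField.pow_card]
end
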